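/- arXiv:2504.17513 — 2 statements merged into one kernel-verified Lean document; each statement's English description precedes it below -/
import Mathlib

section
/- Let (W,S) be a Coxeter system of type (4,4,4) with S = {r,s,t}. Then tstr·α_s ∩ stsr·α_t ∩ (W ∖ {r_{{s,t}}·r}) ⊆ r_{{s,t}}·α_r, where r_{{s,t}} = stst is the longest element of ⟨s,t⟩. -/
/-!
Write `w = stst·x`. Since `(st)⁴ = 1`, the hypotheses say `rs·x ∈ α_s` and `rt·x ∈ α_t`.
Translating the simple root `α_u` by `v` with `ℓ(vu) > ℓ(v)` gives the positive root of the
reflection `vuv⁻¹`; as `ℓ(srs) = 3` and `(sr)s(sr)⁻¹ = rsr`, this turns the hypotheses into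
`ℓ(rsr·x) > ℓ(x)` and `ℓ(rtr·x) > ℓ(x)`. Now if `ℓ(rx) < ℓ(x)` and `x ≠ r`, then `rx ≠ 1` has a
left descent `u`, which cannot be `r`, and then `ℓ(rur·x) < ℓ(x)`, a contradiction.

Translating roots is the strong exchange condition. It comes from Tits' reflection cocycle: the
maps `(x, e) ↦ (sᵢ x sᵢ, e + [x = sᵢ])` on `W × ZMod 2` satisfy the Coxeter relations, and the
second coordinate of `w·(t, 0)` is `1` exactly when the reflection `t` is a right inversion of
`w`. That `ℓ(srs) = 3` is seen in the dihedral group of order 8.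
-/

open CoxeterSystem

/-- The Coxeter matrix of type `(4,4,4)`. -/
def M444 : CoxeterMatrix (Fin 3) where
  M := fun i j => if i = j then 1 else 4
  isSymm := by
    ext i j
    by_cases h : i = j <;> simp [Matrix.transpose, h, eq_comm]
  diagonal := fun i => by simp
  off_diagonal := fun i j h => by simp [h]

variable {W : Type} [Group W]

/-- Left translation of a subset of `W`. -/
def wmul (v : W) (A : Set W) : Set W := (v * ·) '' A

/-- The simple root `α_u = {w ∈ W : ℓ(uw) > ℓ(w)}`. -/
def simpleRoot (cs : CoxeterSystem M444 W) (u : Fin 3) : Set W :=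
  {w : W | cs.length (cs.simple u * w) > cs.length w}

theorem inv_mul_mul_eq_iff_eq_mul_mul_inv {G : Type*} [Group G] (g x y : G) :
    g⁻¹ * x * g = y ↔ x = g * y * g⁻¹ := by
  constructor
  · rintro rfl; group
  · rintro rfl; group

theorem ZMod.eq_zero_iff_ne_one_of_two (z : ZMod 2) : z = 0 ↔ z ≠ 1 := by
  revert z
  decide

namespace CoxeterSystem

section

variable {B : Type*} {M : CoxeterMatrix B} {W : Type*} [Group W] (cs : CoxeterSystem M W)

local prefix:100 "s " => cs.simple
local prefix:100 "π " => cs.wordProd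
local prefix:100 "ℓ " => cs.length

open scoped Classical in
noncomputable def reflectionFlip (i : B) (p : W × ZMod 2) : W × ZMod 2 :=
  (s i * p.1 * s i, p.2 + if p.1 = s i then 1 else 0)

open scoped Classical in
theorem reflectionFlip_apply (i : B) (x : W) (e : ZMod 2) :
    cs.reflectionFlip i (x, e) = (s i * x * s i, e + if x = s i then 1 else 0) := rfl

theorem simple_conj_eq_simple_iff (i : B) (x : W) : s i * x * s i = s i ↔ x = s i := by
  simpa using inv_mul_mul_eq_iff_eq_mul_mul_inv (s i) x (s i)

theorem reflectionFlip_involutive (i : B) : Function.Involutive (cs.reflectionFlip i) := by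
  rintro ⟨x, e⟩
  rw [reflectionFlip_apply, reflectionFlip_apply, simple_conj_eq_simple_iff, add_assoc,
    CharTwo.add_self_eq_zero, add_zero]
  simp [mul_assoc]

noncomputable def reflectionPerm (i : B) : Equiv.Perm (W × ZMod 2) :=
  (cs.reflectionFlip_involutive i).toPerm

open scoped Classical in
theorem reflectionPerm_mul_apply (i j : B) (x : W) (e : ZMod 2) :
    (cs.reflectionPerm i * cs.reflectionPerm j) (x, e) =
      ((s j * s i)⁻¹ * x * (s j * s i),
        e + (if x = s j then 1 else 0) + if x = s j * s i * s j then 1 else 0) := by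
  have hconj : s j * x * s j = s i ↔ x = s j * s i * s j := by
    simpa using inv_mul_mul_eq_iff_eq_mul_mul_inv (s j) x (s i)
  simp only [Equiv.Perm.mul_apply, reflectionPerm, Function.Involutive.coe_toPerm,
    reflectionFlip_apply]
  rw [hconj]
  simp [mul_assoc]

open scoped Classical in
theorem reflectionPerm_mul_pow_apply (i j : B) (k : ℕ) (x : W) (e : ZMod 2) :
    ((cs.reflectionPerm i * cs.reflectionPerm j) ^ k) (x, e) =
      (((s j * s i) ^ k)⁻¹ * x * (s j * s i) ^ k,
        e + ∑ l ∈ Finset.range (2 * k), if x = (s j * s i) ^ l * s j then 1 else 0) := by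
  induction k generalizing x e with
  | zero => simp
  | succ k ih =>
    have hconj (l : ℕ) : (s j * s i)⁻¹ * x * (s j * s i) = (s j * s i) ^ l * s j ↔
        x = (s j * s i) ^ (l + 2) * s j := by
      rw [inv_mul_mul_eq_iff_eq_mul_mul_inv, ← mul_assoc (s j * s i), ← pow_succ']
      simp only [mul_inv_rev, inv_simple, pow_succ _ (l + 1), mul_assoc]
    rw [pow_succ, Equiv.Perm.mul_apply, reflectionPerm_mul_apply, ih]
    simp only [hconj]
    ext
    · simp only [pow_succ', mul_inv_rev, mul_assoc]
    · rw [mul_add, mul_one, Finset.sum_range_succ', Finset.sum_range_succ']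
      simp only [zero_add, pow_zero, one_mul, pow_one, add_assoc, Nat.reduceAdd]
      abel

open scoped Classical in
theorem isLiftable_reflectionPerm : M.IsLiftable cs.reflectionPerm := by
  intro i j
  have hb : (s j * s i) ^ M i j = 1 := by
    rw [M.symmetric]
    exact cs.simple_mul_simple_pow j i
  ext ⟨x, e⟩ : 1
  -- each `(s j * s i) ^ l * s j` is tested at `l` and at `l + M i j`, so the parities cancel
  rw [reflectionPerm_mul_pow_apply, two_mul, Finset.sum_range_add]
  simp only [pow_add, hb, one_mul, inv_one, mul_one, CharTwo.add_self_eq_zero, add_zero,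
    Equiv.Perm.one_apply]

noncomputable def reflectionRep : W →* Equiv.Perm (W × ZMod 2) :=
  cs.lift ⟨cs.reflectionPerm, cs.isLiftable_reflectionPerm⟩

noncomputable def inversionParity (w t : W) : ZMod 2 :=
  (cs.reflectionRep w (t, 0)).2

theorem reflectionRep_simple (i : B) : cs.reflectionRep (s i) = cs.reflectionPerm i :=
  cs.lift_apply_simple _ i

theorem reflectionRep_apply (w t : W) (e : ZMod 2) :
    cs.reflectionRep w (t, e) = (w * t * w⁻¹, e + cs.inversionParity w t) := by
  induction w using cs.simple_induction_left generalizing e with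
  | one => simp [inversionParity]
  | mul_simple_left w i ih =>
    rw [inversionParity, map_mul, reflectionRep_simple, Equiv.Perm.mul_apply,
      Equiv.Perm.mul_apply, ih, ih 0]
    simp [reflectionPerm, reflectionFlip_apply, mul_assoc, add_assoc]

theorem inversionParity_mul (u v t : W) :
    cs.inversionParity (u * v) t =
      cs.inversionParity v t + cs.inversionParity u (v * t * v⁻¹) := by
  have h : cs.reflectionRep (u * v) (t, 0) = cs.reflectionRep u (cs.reflectionRep v (t, 0)) := by
    rw [map_mul, Equiv.Perm.mul_apply]
  rw [reflectionRep_apply, reflectionRep_apply, reflectionRep_apply] at h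
  simpa using congrArg Prod.snd h

theorem inversionParity_one (t : W) : cs.inversionParity 1 t = 0 := by
  simp [inversionParity]

open scoped Classical in
theorem inversionParity_simple (i : B) (t : W) :
    cs.inversionParity (s i) t = if t = s i then 1 else 0 := by
  simp [inversionParity, reflectionRep_simple, reflectionPerm, reflectionFlip_apply]

theorem inversionParity_inv_conj (u x : W) :
    cs.inversionParity u⁻¹ (u * x * u⁻¹) = cs.inversionParity u x := by
  rw [← CharTwo.add_eq_zero, add_comm, ← inversionParity_mul, inv_mul_cancel, inversionParity_one]

theorem inversionParity_conj (u g x : W) :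
    cs.inversionParity (u * g * u⁻¹) (u * x * u⁻¹) =
      cs.inversionParity g x + cs.inversionParity u x + cs.inversionParity u (g * x * g⁻¹) := by
  have hx : u⁻¹ * (u * x * u⁻¹) * u⁻¹⁻¹ = x := by group
  rw [inversionParity_mul, hx, inversionParity_mul, inversionParity_inv_conj]
  abel

theorem inversionParity_self {t : W} (ht : cs.IsReflection t) : cs.inversionParity t t = 1 := by
  obtain ⟨u, i, rfl⟩ := ht
  rw [inversionParity_conj, simple_mul_simple_self, one_mul, inv_simple, inversionParity_simple,
    if_pos rfl, add_assoc, CharTwo.add_self_eq_zero, add_zero]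

theorem inversionParity_wordProd_eq_zero {ω : List B} {t : W} (h : t ∉ cs.rightInvSeq ω) :
    cs.inversionParity (π ω) t = 0 := by
  induction ω with
  | nil => exact cs.inversionParity_one t
  | cons i ω ih =>
    rw [rightInvSeq, List.mem_cons, not_or] at h
    have hconj : π ω * t * (π ω)⁻¹ ≠ s i := by
      intro hc
      apply h.1
      rw [← hc]
      group
    rw [wordProd_cons, inversionParity_mul, ih h.2, inversionParity_simple, if_neg hconj,
      add_zero]

theorem isRightInversion_of_inversionParity_eq_one {w t : W} (h : cs.inversionParity w t = 1) :
    cs.IsRightInversion w t := by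
  obtain ⟨ω, hω, rfl⟩ := cs.exists_isReduced w
  by_cases ht : t ∈ cs.rightInvSeq ω
  · exact cs.isRightInversion_of_mem_rightInvSeq hω ht
  · simp [cs.inversionParity_wordProd_eq_zero ht] at h

theorem isRightInversion_iff_inversionParity_eq_one {w t : W} (ht : cs.IsReflection t) :
    cs.IsRightInversion w t ↔ cs.inversionParity w t = 1 := by
  refine ⟨fun hw => ?_, cs.isRightInversion_of_inversionParity_eq_one⟩
  by_contra hne
  have hwt : cs.inversionParity (w * t) t = 1 := by
    rw [inversionParity_mul, inversionParity_self cs ht, mul_inv_cancel_right,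
      (ZMod.eq_zero_iff_ne_one_of_two _).2 hne, add_zero]
  exact ht.isRightInversion_mul_left_iff.1 (cs.isRightInversion_of_inversionParity_eq_one hwt) hw

theorem isLeftInversion_conj_iff {w t : W} (ht : cs.IsReflection t)
    (hw : ¬cs.IsRightInversion w t) (x : W) :
    cs.IsLeftInversion x (w * t * w⁻¹) ↔ cs.IsLeftInversion (w⁻¹ * x) t := by
  have hwt : cs.inversionParity w⁻¹ (w * t * w⁻¹) = 0 := by
    rwa [inversionParity_inv_conj, ZMod.eq_zero_iff_ne_one_of_two, Ne,
      ← isRightInversion_iff_inversionParity_eq_one cs ht]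
  have hx : x⁻¹ = (w⁻¹ * x)⁻¹ * w⁻¹ := by group
  have ht' : w⁻¹ * (w * t * w⁻¹) * w⁻¹⁻¹ = t := by group
  rw [← isRightInversion_inv_iff, ← isRightInversion_inv_iff,
    isRightInversion_iff_inversionParity_eq_one cs (ht.conj w),
    isRightInversion_iff_inversionParity_eq_one cs ht, hx, inversionParity_mul, hwt, zero_add,
    ht']

theorem not_isLeftInversion_iff_length_lt {w t : W} (ht : cs.IsReflection t) :
    ¬cs.IsLeftInversion w t ↔ ℓ w < ℓ (t * w) := by
  rw [IsLeftInversion, not_and, not_lt]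
  exact ⟨fun h => lt_of_le_of_ne (h ht) (ht.length_mul_right_ne w).symm,
    fun h _ => h.le⟩

theorem length_lt_simple_mul_of_forall_ne {x : W} {j : B} (hx : x ≠ s j)
    (h : ∀ i, i ≠ j → ℓ x < ℓ (s j * s i * s j * x)) : ℓ x < ℓ (s j * x) := by
  by_contra hle
  have hdesc : ℓ (s j * x) + 1 = ℓ x := (cs.length_simple_mul x j).resolve_left (by omega)
  have hy : s j * x ≠ 1 := fun h1 => hx (by rw [← mul_eq_one_iff_inv_eq.1 h1, inv_simple])
  obtain ⟨i, hi⟩ := cs.exists_leftDescent_of_ne_one hy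
  have hij : i ≠ j := by
    rintro rfl
    rw [IsLeftDescent, simple_mul_simple_cancel_left] at hi
    omega
  have hbound : ℓ (s j * s i * s j * x) ≤ ℓ (s i * (s j * x)) + 1 := by
    have := cs.length_mul_le (s j) (s i * (s j * x))
    rw [length_simple] at this
    simp only [mul_assoc]
    omega
  have := h i hij
  unfold IsLeftDescent at hi
  omega

end

end CoxeterSystem

namespace M444

theorem apply_of_ne {i j : Fin 3} (h : i ≠ j) : M444 i j = 4 := if_neg h

theorem isLiftable_of_mul_self_eq_one {f : Fin 3 → DihedralGroup 4} (hf : ∀ k, f k * f k = 1) :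
    M444.IsLiftable f := by
  intro p q
  by_cases hpq : p = q
  · subst hpq
    rw [M444.diagonal, pow_one]
    exact hf p
  · have hexp : Monoid.exponent (DihedralGroup 4) = 4 := by
      rw [DihedralGroup.exponent]
      rfl
    rw [apply_of_ne hpq]
    simpa [hexp] using Monoid.pow_exponent_eq_one (f p * f q)

end M444

namespace CoxeterSystem

variable (cs : CoxeterSystem M444 W)

local prefix:100 "s " => cs.simple
local prefix:100 "ℓ " => cs.length

theorem simple_mul_simple_pow_four {i j : Fin 3} (hij : i ≠ j) : (s i * s j) ^ 4 = 1 := by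
  simpa [M444.apply_of_ne hij] using cs.simple_mul_simple_pow i j

noncomputable def toDihedral (i j : Fin 3) : W →* DihedralGroup 4 :=
  cs.lift ⟨fun k => if k = i then .sr 0 else if k = j then .sr 1 else 1,
    M444.isLiftable_of_mul_self_eq_one fun k => by split_ifs <;> decide⟩

theorem length_simple_mul_simple_mul_simple {i j : Fin 3} (hij : i ≠ j) :
    ℓ (s i * s j * s i) = 3 := by
  have hle : ℓ (s i * s j * s i) ≤ 3 := by
    have h1 := cs.length_mul_le (s i * s j) (s i)
    have h2 := cs.length_mul_le (s i) (s j)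
    simp only [length_simple] at h1 h2
    omega
  have hodd : Odd (ℓ (s i * s j * s i)) := by
    simpa [inv_simple] using ((cs.isReflection_simple j).conj (s i)).odd_length
  have hne : ℓ (s i * s j * s i) ≠ 1 := by
    rw [Ne, length_eq_one_iff]
    rintro ⟨k, hk⟩
    have := congrArg (cs.toDihedral i j) hk
    simp only [toDihedral, map_mul, lift_apply_simple, if_neg hij.symm] at this
    split_ifs at this <;> exact absurd this (by decide)
  obtain ⟨n, hn⟩ := hodd
  omega

theorem simple_mul_simple_pow_three_mul_simple_mul {i j : Fin 3} (hij : i ≠ j) (y : W) :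
    s i * (s j * (s i * (s j * (s i * (s j * (s i * y)))))) = s j * y := by
  calc s i * (s j * (s i * (s j * (s i * (s j * (s i * y))))))
      = (s i * s j) ^ 4 * (s j * y) := by
        simp only [pow_succ, pow_zero, one_mul, mul_assoc, simple_mul_simple_cancel_left]
    _ = s j * y := by rw [cs.simple_mul_simple_pow_four hij, one_mul]

theorem not_isRightInversion_simple_mul_simple {i j : Fin 3} (hij : i ≠ j) :
    ¬cs.IsRightInversion (s j * s i) (s j) := by
  rw [isRightInversion_simple_iff_isRightDescent, IsRightDescent,
    cs.length_simple_mul_simple_mul_simple hij.symm, not_lt]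
  have := cs.length_mul_le (s j) (s i)
  simp only [length_simple] at this
  omega

theorem length_lt_length_simple_mul_simple_mul_simple_mul {i j : Fin 3} (hij : i ≠ j) {x : W}
    (h : ℓ (s i * (s j * x)) < ℓ (s j * (s i * (s j * x)))) : ℓ x < ℓ (s i * s j * s i * x) := by
  have hconj : s j * s i * s j * (s j * s i)⁻¹ = s i * s j * s i := by
    simpa [mul_assoc] using cs.simple_mul_simple_pow_three_mul_simple_mul hij.symm (s j * s i)
  have hx : (s j * s i)⁻¹ * x = s i * (s j * x) := by
    simp only [mul_inv_rev, inv_simple, mul_assoc]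
  rw [← hconj, ← not_isLeftInversion_iff_length_lt cs ((cs.isReflection_simple j).conj _),
    isLeftInversion_conj_iff cs (cs.isReflection_simple j)
      (cs.not_isRightInversion_simple_mul_simple hij),
    not_isLeftInversion_iff_length_lt cs (cs.isReflection_simple j), hx]
  exact h

end CoxeterSystem

theorem mem_wmul_iff {v w : W} {A : Set W} : w ∈ wmul v A ↔ v⁻¹ * w ∈ A := by
  constructor
  · rintro ⟨a, ha, rfl⟩
    simpa using ha
  · intro h
    exact ⟨_, h, mul_inv_cancel_left v w⟩

/-- Lemma 2.7 of [BiRGDandTreeproducts]: in type `(4,4,4)` with `S = {r,s,t}` one has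
`tstr·α_s ∩ stsr·α_t ∩ (W ∖ {r_{{s,t}}·r}) ⊆ r_{{s,t}}·α_r`, where `r_{{s,t}} = stst`. -/
theorem stmt15 (cs : CoxeterSystem M444 W)
    (r s t : Fin 3) (hrs : r ≠ s) (hrt : r ≠ t) (hst : s ≠ t) :
    wmul (cs.simple t * cs.simple s * cs.simple t * cs.simple r) (simpleRoot cs s) ∩
      wmul (cs.simple s * cs.simple t * cs.simple s * cs.simple r) (simpleRoot cs t) ∩
      ({cs.simple s * cs.simple t * cs.simple s * cs.simple t * cs.simple r} : Set W)ᶜ ⊆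
    wmul (cs.simple s * cs.simple t * cs.simple s * cs.simple t) (simpleRoot cs r) := by
  rintro w ⟨⟨hws, hwt⟩, hwr⟩
  obtain ⟨x, rfl⟩ : ∃ x, w = cs.simple s * cs.simple t * cs.simple s * cs.simple t * x :=
    ⟨_, (mul_inv_cancel_left _ w).symm⟩
  simp only [mem_wmul_iff, simpleRoot, Set.mem_ofPred_eq, inv_mul_cancel_left] at hws hwt ⊢
  simp only [mul_inv_rev, inv_simple, mul_assoc, simple_mul_simple_cancel_left,
    cs.simple_mul_simple_pow_three_mul_simple_mul hst.symm] at hws hwt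
  refine cs.length_lt_simple_mul_of_forall_ne (j := r) ?_ fun i hi => ?_
  · rintro rfl
    exact hwr rfl
  · obtain rfl | rfl : i = s ∨ i = t := by omega
    · exact cs.length_lt_length_simple_mul_simple_mul_simple_mul hrs hws
    · exact cs.length_lt_length_simple_mul_simple_mul_simple_mul hrt hwt
end

section
/- Let X be a finite set and let R be a set of elements of the free group F(X) on X. If the presented group ⟨X | R⟩ (the quotient of F(X) by the normal closure of R) is finitely presented, then there exists a finite subset F ⊆ R such that the normal closure of F in F(X) equals the normal closure of R; in particular ⟨X | F⟩ = ⟨X | R⟩. -/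
/-!
Fix a surjection `φ : F(X) → G` with `X` finite and a finite presentation `ψ : F(Y) → G` with
relators `E`. Lifting through the two surjections gives `α : F(Y) → F(X)` and `β : F(X) → F(Y)`
over `G`. Then `ker φ` is normally generated by the finite set `α(E) ∪ {x⁻¹ α(β(x)) | x ∈ X}`:
modulo these, `α ∘ β` is the identity, and `β` sends `ker φ` into `ker ψ`. Applied to
`G = ⟨X | R⟩`, the normal closure of `R` is normally generated by finitely many of its elements,
and each of those already lies in the normal closure of finitely many elements of `R`.
-/

/-- A group is finitely presented if it is isomorphic to `⟨Y | E⟩` for some finite set of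
generators `Y` and finite set of relators `E`. -/
def IsFinitelyPresentedGroup (G : Type) [Group G] : Prop :=
  ∃ (Y : Type) (_ : Finite Y) (E : Set (FreeGroup Y)),
    E.Finite ∧ Nonempty (G ≃* PresentedGroup E)

namespace Subgroup

variable {G : Type*} [Group G]

theorem exists_finite_subset_of_mem_normalClosure {R : Set G} {x : G}
    (hx : x ∈ normalClosure R) : ∃ T ⊆ R, T.Finite ∧ x ∈ normalClosure T := by
  induction hx using closure_induction with
  | mem y hy =>
    obtain ⟨a, ha, hconj⟩ := Group.mem_conjugatesOfSet_iff.mp hy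
    exact ⟨{a}, Set.singleton_subset_iff.mpr ha, Set.finite_singleton a,
      conjugatesOfSet_subset_normalClosure (Group.mem_conjugatesOfSet_iff.mpr ⟨a, rfl, hconj⟩)⟩
  | one => exact ⟨∅, Set.empty_subset R, Set.finite_empty, one_mem _⟩
  | mul a b _ _ ha hb =>
    obtain ⟨T, hTR, hT, haT⟩ := ha
    obtain ⟨U, hUR, hU, hbU⟩ := hb
    exact ⟨T ∪ U, Set.union_subset hTR hUR, hT.union hU,
      mul_mem (normalClosure_mono Set.subset_union_left haT)
        (normalClosure_mono Set.subset_union_right hbU)⟩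
  | inv a _ ha =>
    obtain ⟨T, hTR, hT, haT⟩ := ha
    exact ⟨T, hTR, hT, inv_mem haT⟩

theorem exists_finite_subset_normalClosure_eq {R : Set G}
    (h : (normalClosure R).IsFinitelyNormallyGenerated) :
    ∃ F ⊆ R, F.Finite ∧ normalClosure F = normalClosure R := by
  obtain ⟨S, hS, hSR⟩ := h
  have hSmem : ∀ s ∈ S, s ∈ normalClosure R := fun s hs => hSR ▸ subset_normalClosure hs
  choose! T hTR hT hsT using fun s hs => exists_finite_subset_of_mem_normalClosure (hSmem s hs)
  refine ⟨⋃ s ∈ S, T s, Set.iUnion₂_subset hTR, hS.biUnion hT,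
    le_antisymm (normalClosure_mono (Set.iUnion₂_subset hTR)) ?_⟩
  rw [← hSR]
  exact normalClosure_le_normal fun s hs =>
    normalClosure_mono (Set.subset_iUnion₂_of_subset s hs subset_rfl) (hsT s hs)

end Subgroup

namespace FreeGroup

variable {X Y G : Type*} [Group G]

theorem exists_comp_eq_of_surjective {H : Type*} [Group H] {φ : G →* H}
    (hφ : Function.Surjective φ) (f : FreeGroup X →* H) : ∃ α : FreeGroup X →* G, φ.comp α = f := by
  choose g hg using fun x => hφ (f (of x))
  exact ⟨lift g, ext_hom _ _ fun x => by simp [hg x]⟩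

theorem inv_mul_mem_of_forall_of {N : Subgroup G} [N.Normal] {f g : FreeGroup X →* G}
    (h : ∀ x, (f (of x))⁻¹ * g (of x) ∈ N) (w : FreeGroup X) : (f w)⁻¹ * g w ∈ N := by
  have hfg : (QuotientGroup.mk' N).comp f = (QuotientGroup.mk' N).comp g :=
    ext_hom _ _ fun x => QuotientGroup.eq.mpr (h x)
  exact QuotientGroup.eq.mp (DFunLike.congr_fun hfg w)

theorem ker_eq_normalClosure_of_comp_eq {φ : FreeGroup X →* G} {ψ : FreeGroup Y →* G}
    {α : FreeGroup Y →* FreeGroup X} {β : FreeGroup X →* FreeGroup Y}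
    (hα : φ.comp α = ψ) (hβ : ψ.comp β = φ) {E : Set (FreeGroup Y)}
    (hE : ψ.ker = Subgroup.normalClosure E) :
    φ.ker = Subgroup.normalClosure (α '' E ∪ Set.range fun x => (of x)⁻¹ * α (β (of x))) := by
  set N := Subgroup.normalClosure (α '' E ∪ Set.range fun x => (of x)⁻¹ * α (β (of x)))
  have hφαβ : ∀ w, φ (α (β w)) = φ w := fun w => by
    rw [← MonoidHom.comp_apply φ α, hα, ← MonoidHom.comp_apply, hβ]
  apply le_antisymm
  · intro w hw
    have hαβw : α (β w) ∈ N := by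
      have hβw : β w ∈ ψ.ker := by rwa [MonoidHom.mem_ker, ← MonoidHom.comp_apply, hβ]
      rw [hE] at hβw
      exact Subgroup.normalClosure_mono Set.subset_union_left
        (Subgroup.map_normalClosure_le E α (Subgroup.mem_map_of_mem α hβw))
    have hw' : w⁻¹ * α (β w) ∈ N :=
      inv_mul_mem_of_forall_of (f := MonoidHom.id _) (g := α.comp β)
        (fun x => Subgroup.subset_normalClosure (Or.inr ⟨x, rfl⟩)) w
    simpa using N.mul_mem hαβw (N.inv_mem hw')
  · refine Subgroup.normalClosure_le_normal ?_
    rintro s (⟨e, he, rfl⟩ | ⟨x, rfl⟩)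
    · rw [SetLike.mem_coe, MonoidHom.mem_ker, ← MonoidHom.comp_apply, hα, ← MonoidHom.mem_ker, hE]
      exact Subgroup.subset_normalClosure he
    · simp [hφαβ]

end FreeGroup

theorem Group.IsFinitelyPresented.isFinitelyNormallyGenerated_ker {X G : Type*} [Group G]
    [Finite X] [hG : Group.IsFinitelyPresented G] {φ : FreeGroup X →* G}
    (hφ : Function.Surjective φ) : φ.ker.IsFinitelyNormallyGenerated := by
  obtain ⟨n, ψ, hψ, E, hE, hEψ⟩ := hG
  obtain ⟨α, hα⟩ := FreeGroup.exists_comp_eq_of_surjective hφ ψ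
  obtain ⟨β, hβ⟩ := FreeGroup.exists_comp_eq_of_surjective hψ φ
  exact ⟨_, (hE.image α).union (Set.finite_range _),
    (FreeGroup.ker_eq_normalClosure_of_comp_eq hα hβ hEψ.symm).symm⟩

theorem IsFinitelyPresentedGroup.isFinitelyPresented {G : Type} [Group G]
    (h : IsFinitelyPresentedGroup G) : Group.IsFinitelyPresented G := by
  obtain ⟨Y, _, E, hE, ⟨e⟩⟩ := h
  have : Finite E := hE
  exact .equiv e.symm

/-- If `X` is finite and the presented group `⟨X | R⟩` is finitely presented, then some finite
subset `F ⊆ R` has the same normal closure as `R` (so `⟨X | F⟩ = ⟨X | R⟩`). -/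
theorem stmt18 (X : Type) [Finite X] (R : Set (FreeGroup X))
    (h : IsFinitelyPresentedGroup (PresentedGroup R)) :
    ∃ F ⊆ R, F.Finite ∧
      Subgroup.normalClosure F = Subgroup.normalClosure R := by
  have := h.isFinitelyPresented
  apply Subgroup.exists_finite_subset_normalClosure_eq
  have hker : (PresentedGroup.mk R).ker = Subgroup.normalClosure R := QuotientGroup.ker_mk' _
  exact hker ▸ Group.IsFinitelyPresented.isFinitelyNormallyGenerated_ker
    (PresentedGroup.mk_surjective R)
end
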